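/- The Jacobi group Γ^J is generated by the two elements G₀ = [S,(0,0)] and G₂ = [T,(1,0)]; that is, the subgroup of Γ^J generated by {G₀, G₂} is all of Γ^J. -/

import Mathlib

/-- The Jacobi group: pairs `[M,(λ,μ)]` with `M ∈ SL(2,ℤ)` and `(λ,μ) ∈ ℤ²`. -/
@[ext]
structure JacobiGroup where
  M : Matrix.SpecialLinearGroup (Fin 2) ℤ
  v : ℤ × ℤ

namespace JacobiGroup

/-- The right action of `M ∈ SL(2,ℤ)` on a row vector `(λ,μ)`. -/
def rowAct (v : ℤ × ℤ) (M : Matrix.SpecialLinearGroup (Fin 2) ℤ) : ℤ × ℤ :=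
  (v.1 * M.1 0 0 + v.2 * M.1 1 0, v.1 * M.1 0 1 + v.2 * M.1 1 1)

lemma rowAct_one (v : ℤ × ℤ) : rowAct v 1 = v := by
  simp [rowAct, Matrix.SpecialLinearGroup.coe_one, Matrix.one_apply]

lemma rowAct_zero (M : Matrix.SpecialLinearGroup (Fin 2) ℤ) : rowAct 0 M = 0 := by
  simp [rowAct]

lemma rowAct_rowAct (v : ℤ × ℤ) (M N : Matrix.SpecialLinearGroup (Fin 2) ℤ) :
    rowAct (rowAct v M) N = rowAct v (M * N) := by
  simp only [rowAct, Matrix.SpecialLinearGroup.coe_mul, Matrix.mul_apply, Fin.sum_univ_two]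
  exact Prod.ext (by ring) (by ring)

lemma rowAct_add (v w : ℤ × ℤ) (M : Matrix.SpecialLinearGroup (Fin 2) ℤ) :
    rowAct (v + w) M = rowAct v M + rowAct w M := by
  simp only [rowAct, Prod.fst_add, Prod.snd_add, Prod.mk_add_mk]
  exact Prod.ext (by ring) (by ring)

lemma rowAct_neg (v : ℤ × ℤ) (M : Matrix.SpecialLinearGroup (Fin 2) ℤ) :
    rowAct (-v) M = -(rowAct v M) := by
  simp only [rowAct, Prod.fst_neg, Prod.snd_neg, Prod.neg_mk]
  exact Prod.ext (by ring) (by ring)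

instance : Mul JacobiGroup :=
  ⟨fun g h => ⟨g.M * h.M, rowAct g.v h.M + h.v⟩⟩

instance : One JacobiGroup := ⟨⟨1, 0⟩⟩

instance : Inv JacobiGroup := ⟨fun g => ⟨g.M⁻¹, -(rowAct g.v g.M⁻¹)⟩⟩

lemma mul_def (g h : JacobiGroup) : g * h = ⟨g.M * h.M, rowAct g.v h.M + h.v⟩ := rfl

lemma one_def : (1 : JacobiGroup) = ⟨1, 0⟩ := rfl

lemma inv_def (g : JacobiGroup) : g⁻¹ = ⟨g.M⁻¹, -(rowAct g.v g.M⁻¹)⟩ := rfl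

/-- The Jacobi group law `[M₁,(λ₁,μ₁)]·[M₂,(λ₂,μ₂)] = [M₁M₂, (λ₁,μ₁)M₂ + (λ₂,μ₂)]`
makes `JacobiGroup` a group. -/
instance : Group JacobiGroup where
  mul_assoc a b c := by
    ext1
    · show a.M * b.M * c.M = a.M * (b.M * c.M)
      exact mul_assoc _ _ _
    · show rowAct (rowAct a.v b.M + b.v) c.M + c.v =
        rowAct a.v (b.M * c.M) + (rowAct b.v c.M + c.v)
      rw [rowAct_add, rowAct_rowAct, add_assoc]
  one_mul a := by
    ext1
    · show (1 : Matrix.SpecialLinearGroup (Fin 2) ℤ) * a.M = a.M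
      exact one_mul _
    · show rowAct 0 a.M + a.v = a.v
      rw [rowAct_zero, zero_add]
  mul_one a := by
    ext1
    · show a.M * 1 = a.M
      exact mul_one _
    · show rowAct a.v 1 + 0 = a.v
      rw [rowAct_one, add_zero]
  inv_mul_cancel a := by
    ext1
    · show a.M⁻¹ * a.M = 1
      exact inv_mul_cancel _
    · show rowAct (-(rowAct a.v a.M⁻¹)) a.M + a.v = 0
      rw [rowAct_neg, rowAct_rowAct, inv_mul_cancel, rowAct_one, neg_add_cancel]

end JacobiGroup

/-- The matrix `S = [[1,1],[0,1]]` in `SL(2,ℤ)`. -/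
def matS : Matrix.SpecialLinearGroup (Fin 2) ℤ :=
  ⟨!![1, 1; 0, 1], by norm_num [Matrix.det_fin_two_of]⟩

/-- The matrix `T = [[0,−1],[1,0]]` in `SL(2,ℤ)`. -/
def matT : Matrix.SpecialLinearGroup (Fin 2) ℤ :=
  ⟨!![0, -1; 1, 0], by norm_num [Matrix.det_fin_two_of]⟩

/-- `G₀ = [S,(0,0)]`. -/
def G0 : JacobiGroup := ⟨matS, (0, 0)⟩

/-- `G₁ = [S,(1,0)]`. -/
def G1 : JacobiGroup := ⟨matS, (1, 0)⟩

/-- `G₂ = [T,(1,0)]`. -/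
def G2 : JacobiGroup := ⟨matT, (1, 0)⟩

/-!
The elements `[M, 0]` form a copy of `SL(2,ℤ)` and the elements `[1, v]` a normal copy of `ℤ²`, and
every `[M, v]` is `[M, 0] · [1, v]`. Since `G₀ = [S, 0]` and `G₂ · [1, (1,0)]⁻¹ = [T, 0]`, and `S`, `T`
generate `SL(2,ℤ)`, it suffices to reach the translations by `(1,0)` and `(0,1)`. The word
`G₀ G₂³ (G₀ G₂)²` has matrix part `-(ST)³ = 1` and is the translation by `(1,0)`; conjugating it by
`[T, 0]` gives the translation by `(0,1)`.
-/

namespace JacobiGroup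

open Matrix

def ofSL : SpecialLinearGroup (Fin 2) ℤ →* JacobiGroup where
  toFun M := ⟨M, 0⟩
  map_one' := rfl
  map_mul' M N := by
    rw [mul_def]
    exact JacobiGroup.ext rfl (by rw [rowAct_zero, add_zero])

def translation : Multiplicative (ℤ × ℤ) →* JacobiGroup where
  toFun v := ⟨1, v.toAdd⟩
  map_one' := rfl
  map_mul' v w := by
    rw [mul_def]
    exact JacobiGroup.ext (mul_one 1).symm (by rw [rowAct_one]; rfl)

lemma ofSL_mul_translation (g : JacobiGroup) : ofSL g.M * translation (.ofAdd g.v) = g := by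
  rw [mul_def]
  exact JacobiGroup.ext (mul_one g.M) (by simp [ofSL, translation, rowAct_zero])

lemma eq_top_of_ofSL_mem_of_translation_mem {H : Subgroup JacobiGroup}
    (hSL : ∀ M, ofSL M ∈ H) (htr : ∀ v, translation v ∈ H) : H = ⊤ :=
  H.eq_top_iff'.mpr fun g => ofSL_mul_translation g ▸ mul_mem (hSL g.M) (htr _)

lemma translation_eq_zpow_mul_zpow (v : Multiplicative (ℤ × ℤ)) :
    translation v =
      translation (.ofAdd (1, 0)) ^ v.toAdd.1 * translation (.ofAdd (0, 1)) ^ v.toAdd.2 := by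
  rw [← map_zpow translation, ← map_zpow translation, ← map_mul]
  congr 1
  apply Multiplicative.toAdd.injective
  ext <;> simp

lemma translation_mem {H : Subgroup JacobiGroup} (h₁ : translation (.ofAdd (1, 0)) ∈ H)
    (h₂ : translation (.ofAdd (0, 1)) ∈ H) (v : Multiplicative (ℤ × ℤ)) : translation v ∈ H :=
  translation_eq_zpow_mul_zpow v ▸ mul_mem (zpow_mem h₁ _) (zpow_mem h₂ _)

lemma ofSL_mem {H : Subgroup JacobiGroup} (hS : ofSL matS ∈ H) (hT : ofSL matT ∈ H)
    (M : SpecialLinearGroup (Fin 2) ℤ) : ofSL M ∈ H := by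
  -- `matS` and `matT` are Mathlib's `ModularGroup.T` and `ModularGroup.S`: the letters are swapped.
  have hST : Subgroup.closure {matS, matT} = ⊤ := by
    rw [Set.pair_comm]
    exact SpecialLinearGroup.SL2Z_generators
  have hle : (Subgroup.closure {matS, matT}).map ofSL ≤ H := by
    rw [MonoidHom.map_closure, Subgroup.closure_le, Set.image_pair]
    exact Set.insert_subset hS (Set.singleton_subset_iff.mpr hT)
  exact hle ⟨M, hST ▸ Subgroup.mem_top M, rfl⟩

lemma G0_eq_ofSL : G0 = ofSL matS := rfl

lemma G2_mul_translation_inv : G2 * (translation (.ofAdd (1, 0)))⁻¹ = ofSL matT :=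
  JacobiGroup.ext (Subtype.ext (by decide)) (by decide)

lemma G0_mul_G2_pow : G0 * G2 ^ 3 * (G0 * G2) ^ 2 = translation (.ofAdd (1, 0)) :=
  JacobiGroup.ext (Subtype.ext (by decide)) (by decide)

lemma ofSL_matT_conj_translation :
    ofSL matT * translation (.ofAdd (1, 0)) * (ofSL matT)⁻¹ = translation (.ofAdd (0, 1)) :=
  JacobiGroup.ext (Subtype.ext (by decide)) (by decide)

end JacobiGroup

/-- The Jacobi group is generated by `G₀ = [S,(0,0)]` and `G₂ = [T,(1,0)]`. -/
theorem jacobiGroup_generated_by_G0_G2 :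
    Subgroup.closure ({G0, G2} : Set JacobiGroup) = ⊤ := by
  set H := Subgroup.closure ({G0, G2} : Set JacobiGroup)
  have hG0 : G0 ∈ H := Subgroup.subset_closure (by simp)
  have hG2 : G2 ∈ H := Subgroup.subset_closure (by simp)
  have hX : JacobiGroup.translation (.ofAdd (1, 0)) ∈ H :=
    JacobiGroup.G0_mul_G2_pow ▸
      mul_mem (mul_mem hG0 (pow_mem hG2 3)) (pow_mem (mul_mem hG0 hG2) 2)
  have hT : JacobiGroup.ofSL matT ∈ H :=
    JacobiGroup.G2_mul_translation_inv ▸ mul_mem hG2 (inv_mem hX)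
  have hY : JacobiGroup.translation (.ofAdd (0, 1)) ∈ H :=
    JacobiGroup.ofSL_matT_conj_translation ▸ mul_mem (mul_mem hT hX) (inv_mem hT)
  exact JacobiGroup.eq_top_of_ofSL_mem_of_translation_mem
    (JacobiGroup.ofSL_mem (JacobiGroup.G0_eq_ofSL ▸ hG0) hT) (JacobiGroup.translation_mem hX hY)
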